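/- arXiv:1111.1558 — 2 statements merged into one kernel-verified Lean document; each statement's English description precedes it below -/
import Mathlib

section
/- Let H be a hypergraph on a finite vertex set V, let f be an image of H, and suppose there is an alternating chain a_0, b_0, a_1, b_1, …, a_n (for f) of length n ≥ 1 with a_0 ≠ a_n. Then there exists an image f' of H such that the image-degree of a_n under f' equals its image-degree under f plus 1, the image-degree of a_0 under f' equals its image-degree under f minus 1, and every other vertex has the same image-degree under f' as under f. -/
/-- `f` is an image of the hypergraph with hyperedge family `ℰ`: it assigns to every
hyperedge `e ∈ ℰ` a 2-element subset `f e ⊆ e`. -/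
def IsImage {V : Type*} (ℰ : Finset (Finset V)) (f : Finset V → Finset V) : Prop :=
  ∀ e ∈ ℰ, f e ⊆ e ∧ (f e).card = 2

/-- The image-degree of a vertex `v` under `f`: the number of hyperedges `e ∈ ℰ`
with `v ∈ f e`. -/
def imageDegree {V : Type*} [DecidableEq V] (ℰ : Finset (Finset V))
    (f : Finset V → Finset V) (v : V) : ℕ :=
  (ℰ.filter (fun e => v ∈ f e)).card

/-- An alternating chain `a 0, b 0, a 1, b 1, …, a n` of length `n` for the image `f`:
there are pairwise distinct hyperedges `es 0, …, es (n-1) ∈ ℰ` such that for each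
`i < n` the vertices `a i, b i, a (i+1)` are pairwise distinct, `f (es i) = {a i, b i}`
and `a (i+1) ∈ es i`. -/
def IsAltChain {V : Type*} [DecidableEq V] (ℰ : Finset (Finset V))
    (f : Finset V → Finset V) (n : ℕ) (a b : ℕ → V) (es : ℕ → Finset V) : Prop :=
  (∀ i < n, ∀ j < n, es i = es j → i = j) ∧
  ∀ i < n,
    es i ∈ ℰ ∧ a i ≠ b i ∧ a i ≠ a (i + 1) ∧ b i ≠ a (i + 1) ∧
    f (es i) = {a i, b i} ∧ a (i + 1) ∈ es i

/-! Switch the image along the chain one link at a time: on `e_i` replace `{a_i, b_i}` by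
`{b_i, a_(i+1)}`. Each switch moves one unit of image-degree from `a_i` to `a_(i+1)`, so the
changes telescope to a transfer from `a_0` to `a_n`. Since the hyperedges of the chain are
distinct, `e_i` still carries its original image `{a_i, b_i}` when it is switched. -/

open Finset

section

variable {V : Type*} [DecidableEq V]

theorem imageDegree_update_add {ℰ : Finset (Finset V)} {e : Finset V} (he : e ∈ ℰ)
    (g : Finset V → Finset V) (s : Finset V) (v : V) :
    imageDegree ℰ (Function.update g e s) v + (if v ∈ g e then 1 else 0) =
      imageDegree ℰ g v + (if v ∈ s then 1 else 0) := by
  simp only [imageDegree, card_filter, ← add_sum_erase ℰ _ he, Function.update_self]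
  have hrest : ∑ x ∈ ℰ.erase e, (if v ∈ Function.update g e s x then 1 else 0) =
      ∑ x ∈ ℰ.erase e, (if v ∈ g x then 1 else 0) :=
    sum_congr rfl fun x hx => by rw [Function.update_of_ne (ne_of_mem_erase hx)]
  omega

theorem IsImage.update {ℰ : Finset (Finset V)} {g : Finset V → Finset V} (hg : IsImage ℰ g)
    {e s : Finset V} (hs : s ⊆ e) (hcard : s.card = 2) :
    IsImage ℰ (Function.update g e s) := by
  intro x hx
  rcases eq_or_ne x e with rfl | hxe
  · simpa using ⟨hs, hcard⟩
  · simpa [Function.update_of_ne hxe] using hg x hx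

def chainSwitch (f : Finset V → Finset V) (a b : ℕ → V) (es : ℕ → Finset V) :
    ℕ → Finset V → Finset V
  | 0 => f
  | k + 1 => Function.update (chainSwitch f a b es k) (es k) {b k, a (k + 1)}

theorem chainSwitch_apply_of_forall_ne {f : Finset V → Finset V} {a b : ℕ → V}
    {es : ℕ → Finset V} {k : ℕ} {e : Finset V} (he : ∀ j < k, es j ≠ e) :
    chainSwitch f a b es k e = f e := by
  induction k with
  | zero => rfl
  | succ k ih =>
    rw [chainSwitch, Function.update_of_ne (he k k.lt_succ_self).symm]
    exact ih fun j hj => he j (Nat.lt_succ_of_lt hj)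

namespace IsAltChain

variable {ℰ : Finset (Finset V)} {f : Finset V → Finset V} {n : ℕ} {a b : ℕ → V}
  {es : ℕ → Finset V}

theorem chainSwitch_apply_self (h : IsAltChain ℰ f n a b es) {k : ℕ} (hk : k < n) :
    chainSwitch f a b es k (es k) = {a k, b k} := by
  rw [chainSwitch_apply_of_forall_ne fun j hj hjk => hj.ne (h.1 j (hj.trans hk) k hk hjk)]
  exact (h.2 k hk).2.2.2.2.1

theorem isImage_chainSwitch (h : IsAltChain ℰ f n a b es) (hf : IsImage ℰ f) {k : ℕ}
    (hk : k ≤ n) : IsImage ℰ (chainSwitch f a b es k) := by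
  induction k with
  | zero => exact hf
  | succ k ih =>
    obtain ⟨hesℰ, -, -, hba, hfes, hmem⟩ := h.2 k hk
    have hb : b k ∈ es k := (hf _ hesℰ).1 (by simp [hfes])
    exact (ih (Nat.le_of_succ_le hk)).update (insert_subset hb (singleton_subset_iff.2 hmem))
      (card_pair hba)

/-- Degrees are compared with both indicators added, so that no truncated subtraction occurs. -/
theorem imageDegree_chainSwitch_add (h : IsAltChain ℰ f n a b es) {k : ℕ} (hk : k ≤ n)
    (v : V) :
    imageDegree ℰ (chainSwitch f a b es k) v + (if v = a 0 then 1 else 0) =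
      imageDegree ℰ f v + (if v = a k then 1 else 0) := by
  induction k with
  | zero => rfl
  | succ k ih =>
    obtain ⟨hesℰ, hab, -, hba, -, -⟩ := h.2 k hk
    have hstep := imageDegree_update_add hesℰ (chainSwitch f a b es k) {b k, a (k + 1)} v
    rw [h.chainSwitch_apply_self hk] at hstep
    have hpair : (if v = a k then 1 else 0) +
        (if v ∈ ({b k, a (k + 1)} : Finset V) then 1 else 0) =
        (if v ∈ ({a k, b k} : Finset V) then 1 else 0) + (if v = a (k + 1) then 1 else 0) := by
      simp only [mem_insert, mem_singleton]
      split_ifs <;> simp_all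
    have hprev := ih (Nat.le_of_succ_le hk)
    rw [chainSwitch]
    omega

end IsAltChain

end

theorem altChain_switch_image_general
    {V : Type*} [DecidableEq V]
    (ℰ : Finset (Finset V)) (f : Finset V → Finset V)
    (hf : IsImage ℰ f)
    (n : ℕ) (a b : ℕ → V) (es : ℕ → Finset V)
    (hchain : IsAltChain ℰ f n a b es)
    (hne : a 0 ≠ a n) :
    ∃ f' : Finset V → Finset V, IsImage ℰ f' ∧
      imageDegree ℰ f' (a n) = imageDegree ℰ f (a n) + 1 ∧
      imageDegree ℰ f' (a 0) + 1 = imageDegree ℰ f (a 0) ∧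
      ∀ v : V, v ≠ a 0 → v ≠ a n → imageDegree ℰ f' v = imageDegree ℰ f v := by
  have hdeg := hchain.imageDegree_chainSwitch_add le_rfl
  refine ⟨chainSwitch f a b es n, hchain.isImage_chainSwitch hf le_rfl, ?_, ?_, ?_⟩
  · simpa [Ne.symm hne] using hdeg (a n)
  · simpa [hne] using hdeg (a 0)
  · intro v hv0 hvn
    simpa [hv0, hvn] using hdeg v

theorem altChain_switch_image
    {V : Type*} [Fintype V] [DecidableEq V]
    (ℰ : Finset (Finset V)) (f : Finset V → Finset V)
    (hf : IsImage ℰ f)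
    (n : ℕ) (a b : ℕ → V) (es : ℕ → Finset V)
    (hchain : IsAltChain ℰ f n a b es)
    (hn : 1 ≤ n) (hne : a 0 ≠ a n) :
    ∃ f' : Finset V → Finset V, IsImage ℰ f' ∧
      imageDegree ℰ f' (a n) = imageDegree ℰ f (a n) + 1 ∧
      imageDegree ℰ f' (a 0) + 1 = imageDegree ℰ f (a 0) ∧
      ∀ v : V, v ≠ a 0 → v ≠ a n → imageDegree ℰ f' v = imageDegree ℰ f v :=
  altChain_switch_image_general ℰ f hf n a b es hchain hne
end

section
/- Let H be a hypergraph on a finite vertex set V, let f be an image of H, let k be a natural number, let S be the set of vertices of image-degree at least k + 1 under f, and let U be the set of all vertices reachable from S by alternating chains (in particular S ⊆ U). If e ∈ ℰ is a hyperedge with f(e) = {u, v}, where u ∈ U and v ∉ U, then every vertex of e except v belongs to U, i.e. e \ {v} ⊆ U. -/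
/-- `y` is reachable from the set `X` by alternating chains (chains of length 0
are allowed). -/
def AltReachable {V : Type*} [DecidableEq V] (ℰ : Finset (Finset V))
    (f : Finset V → Finset V) (X : Set V) (y : V) : Prop :=
  ∃ (n : ℕ) (a b : ℕ → V) (es : ℕ → Finset V),
    IsAltChain ℰ f n a b es ∧ a 0 ∈ X ∧ a n = y


/-!
Cut a chain reaching `u` at the first use of `e`. Its endpoint lies in `f e = {u, v}` and is
reachable, so it is `u`; since `e` has not been used yet, the chain can be extended by `e`,
stepping over `v` to any other vertex of `e`.
-/

namespace IsAltChain

variable {V : Type*} [DecidableEq V] {ℰ : Finset (Finset V)} {f : Finset V → Finset V}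
  {n : ℕ} {a b : ℕ → V} {es : ℕ → Finset V}

theorem of_le (h : IsAltChain ℰ f n a b es) {m : ℕ} (hmn : m ≤ n) :
    IsAltChain ℰ f m a b es :=
  ⟨fun i hi j hj => h.1 i (hi.trans_le hmn) j (hj.trans_le hmn),
    fun i hi => h.2 i (hi.trans_le hmn)⟩

theorem exists_le_avoiding_and_mem_image (h : IsAltChain ℰ f n a b es) {e : Finset V}
    (hn : a n ∈ f e) : ∃ m ≤ n, (∀ i < m, es i ≠ e) ∧ a m ∈ f e := by
  by_cases hused : ∃ i, i < n ∧ es i = e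
  · obtain ⟨hlt, hfirst⟩ := Nat.find_spec hused
    refine ⟨Nat.find hused, hlt.le,
      fun i hi hie => Nat.find_min hused hi ⟨hi.trans hlt, hie⟩, ?_⟩
    have hfirst_image := (h.2 _ hlt).2.2.2.2.1
    rw [hfirst] at hfirst_image
    rw [hfirst_image]
    exact Finset.mem_insert_self _ _
  · simp only [not_exists, not_and] at hused
    exact ⟨n, le_rfl, hused, hn⟩

theorem snoc (h : IsAltChain ℰ f n a b es) {e : Finset V} (he : e ∈ ℰ)
    (hfresh : ∀ i < n, es i ≠ e) {y w : V} (hfe : f e = {a n, y}) (hw : w ∈ e)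
    (hy : a n ≠ y) (hnw : a n ≠ w) (hyw : y ≠ w) :
    IsAltChain ℰ f (n + 1) (Function.update a (n + 1) w) (Function.update b n y)
      (Function.update es n e) := by
  have hlast : ∀ i < n + 1, i < n ∨ i = n := fun i hi => (Nat.lt_succ_iff.1 hi).lt_or_eq
  refine ⟨fun i hi j hj hij => ?_, fun i hi => ?_⟩
  · rcases hlast i hi with hi | rfl <;> rcases hlast j hj with hj | rfl
    · simp only [Function.update_of_ne hi.ne, Function.update_of_ne hj.ne] at hij
      exact h.1 i hi j hj hij
    · simp only [Function.update_of_ne hi.ne, Function.update_self] at hij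
      exact absurd hij (hfresh i hi)
    · simp only [Function.update_of_ne hj.ne, Function.update_self] at hij
      exact absurd hij.symm (hfresh j hj)
    · rfl
  · rcases hlast i hi with hi | rfl
    · simp only [Function.update_of_ne hi.ne, Function.update_of_ne (hi.trans n.lt_succ_self).ne,
        Function.update_of_ne (Nat.succ_lt_succ hi).ne]
      exact h.2 i hi
    · simp only [Function.update_self, Function.update_of_ne (Nat.lt_succ_self _).ne]
      exact ⟨he, hy, hnw, hyw, hfe, hw⟩

end IsAltChain

theorem edge_almost_inside_U_general
    {V : Type*} [DecidableEq V]
    (ℰ : Finset (Finset V)) (f : Finset V → Finset V)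
    (S : Set V)
    (U : Set V) (hU : U = {y : V | AltReachable ℰ f S y})
    (e : Finset V) (he : e ∈ ℰ)
    (u v : V) (hfe : f e = {u, v}) (hu : u ∈ U) (hv : v ∉ U) :
    ∀ w ∈ e, w ≠ v → w ∈ U := by
  subst hU
  intro w hw hwv
  by_cases hwu : w = u
  · exact hwu ▸ hu
  have huv : u ≠ v := fun h => hv (h ▸ hu)
  obtain ⟨n, a, b, es, hchain, ha0, rfl⟩ := hu
  obtain ⟨m, hmn, hfresh, hm⟩ :=
    hchain.exists_le_avoiding_and_mem_image (e := e) (by simp [hfe])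
  have hmU : AltReachable ℰ f S (a m) := ⟨m, a, b, es, hchain.of_le hmn, ha0, rfl⟩
  have ham : a m = a n := by
    rw [hfe, Finset.mem_insert, Finset.mem_singleton] at hm
    exact hm.resolve_right fun h => hv (h ▸ hmU)
  refine ⟨m + 1, _, _, _, (hchain.of_le hmn).snoc he hfresh (ham ▸ hfe) hw (ham ▸ huv)
    (ham ▸ Ne.symm hwu) (Ne.symm hwv), ?_, Function.update_self ..⟩
  rwa [Function.update_of_ne (Nat.succ_ne_zero m).symm]

theorem edge_almost_inside_U
    {V : Type*} [Fintype V] [DecidableEq V]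
    (ℰ : Finset (Finset V)) (f : Finset V → Finset V)
    (hf : IsImage ℰ f) (k : ℕ)
    (S : Set V) (hS : S = {x : V | k + 1 ≤ imageDegree ℰ f x})
    (U : Set V) (hU : U = {y : V | AltReachable ℰ f S y})
    (e : Finset V) (he : e ∈ ℰ)
    (u v : V) (hfe : f e = {u, v}) (hu : u ∈ U) (hv : v ∉ U) :
    ∀ w ∈ e, w ≠ v → w ∈ U :=
  edge_almost_inside_U_general ℰ f S U hU e he u v hfe hu hv
end
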